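/- Let k ≥ 1 and for 1 ≤ i ≤ k let f_i, g_i ∈ ℂ[z] be polynomials with f_i(0) ≠ 0 and deg g_i < deg f_i, and suppose the rational functions g_1/f_1, …, g_k/f_k are linearly independent over ℂ. Regarding each g_i(z)/f_i(z) as an element of ℂ[[z]] ⊂ ℂ((z)) (inverting f_i, which is possible since f_i(0) ≠ 0), the ℂ-linear span of {z^{−(k−1)} g_i(z)/f_i(z) : 1 ≤ i ≤ k} ∪ {z^{−i} : i ≥ k} is a point of the Sato Grassmannian UGM. -/

import Mathlib

set_option synthInstance.maxHeartbeats 1000000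
set_option maxHeartbeats 1000000

noncomputable section

/- Shortcut instances to speed up instance search for submodules of `ℂ((z))`. -/
instance (U : Submodule ℂ (LaurentSeries ℂ)) : AddCommGroup U := inferInstance
instance (U : Submodule ℂ (LaurentSeries ℂ)) : Module ℂ U := inferInstance

/-- The variable `z` in the field of formal Laurent series `ℂ((z))`. -/
def zL : LaurentSeries ℂ := HahnSeries.single 1 1

/-- Truncation: keep only the coefficients of nonpositive powers of `z`.
This is the projection onto `V_φ = ℂ[z⁻¹]` along `V₀ = zℂ[[z]]`. -/
def trunc : LaurentSeries ℂ →ₗ[ℂ] LaurentSeries ℂ where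
  toFun f :=
    { coeff := fun n => if n ≤ 0 then f.coeff n else 0
      isPWO_support' := f.isPWO_support.mono (by
        intro n hn
        simp only [Function.mem_support] at hn ⊢
        intro h
        apply hn
        simp [h]) }
  map_add' f g := by
    ext n
    by_cases h : n ≤ 0 <;> simp [HahnSeries.coeff_add, h]
  map_smul' c f := by
    ext n
    by_cases h : n ≤ 0 <;> simp [HahnSeries.coeff_smul, h]

/-- `V_φ = ℂ[z⁻¹]`, realized as the range of the truncation map. -/
def Vphi : Submodule ℂ (LaurentSeries ℂ) := LinearMap.range trunc

/-- The projection `π : ℂ((z)) → V_φ` restricted to a subspace `U`. -/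
def projU (U : Submodule ℂ (LaurentSeries ℂ)) : U →ₗ[ℂ] Vphi :=
  trunc.rangeRestrict.comp U.subtype

/-- The Sato Grassmannian: subspaces `U ⊆ ℂ((z))` such that the kernel and the
cokernel of `π|_U : U → V_φ` are finite dimensional of the same dimension. -/
def UGM : Set (Submodule ℂ (LaurentSeries ℂ)) :=
  {U | FiniteDimensional ℂ (LinearMap.ker (projU U)) ∧
       FiniteDimensional ℂ (Vphi ⧸ LinearMap.range (projU U)) ∧
       Module.finrank ℂ (LinearMap.ker (projU U)) =
         Module.finrank ℂ (Vphi ⧸ LinearMap.range (projU U))}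

/-- A polynomial regarded as an element of `ℂ((z))` (via `ℂ[[z]]`). -/
def polyToL (p : Polynomial ℂ) : LaurentSeries ℂ :=
  HahnSeries.ofPowerSeries ℤ ℂ (p : PowerSeries ℂ)

/-! Let `N` be the span of the `z^{-l}`, `l ≥ k`, and `P` the span of the `k` series
`z^{-(k-1)} g_i/f_i`, which are linearly independent and have no terms below `z^{-(k-1)}`.
The span in question is `U = P ⊕ N`, and `π` is the identity on `N ⊆ V_φ`. Hence `π|_U`
induces a map `U/N ≅ P → V_φ/N ≅ ℂ^k` (the coefficients of `z^0, …, z^{-(k-1)}`) with the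
same kernel and cokernel as `π|_U`, and rank–nullity for a map between two `k`-dimensional
spaces gives `dim ker = dim coker`. -/

open Module Submodule LinearMap

instance {Γ R : Type*} [AddCommMonoid Γ] [PartialOrder Γ] [IsOrderedCancelAddMonoid Γ]
    [CommSemiring R] : SMulCommClass R (HahnSeries Γ R) (HahnSeries Γ R) :=
  ⟨fun r x y => by simp only [smul_eq_mul, ← HahnSeries.C_mul_eq_smul, mul_left_comm]⟩

instance {Γ R : Type*} [AddCommMonoid Γ] [PartialOrder Γ] [IsOrderedCancelAddMonoid Γ]
    [CommSemiring R] : IsScalarTower R (HahnSeries Γ R) (HahnSeries Γ R) :=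
  ⟨fun r x y => by simp only [smul_eq_mul, ← HahnSeries.C_mul_eq_smul, mul_assoc]⟩

theorem ofPowerSeries_div {F : Type*} [Field F] (φ : PowerSeries F) {ψ : PowerSeries F}
    (hψ : PowerSeries.constantCoeff ψ ≠ 0) :
    HahnSeries.ofPowerSeries ℤ F φ / HahnSeries.ofPowerSeries ℤ F ψ =
      HahnSeries.ofPowerSeries ℤ F (φ * ψ⁻¹) := by
  have hψ' : HahnSeries.ofPowerSeries ℤ F ψ ≠ 0 :=
    (map_ne_zero_iff _ HahnSeries.ofPowerSeries_injective).2 fun h => hψ (by simp [h])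
  rw [div_eq_iff hψ', ← map_mul, mul_assoc, PowerSeries.inv_mul_cancel _ hψ, mul_one]

def Submodule.supQuotientEquivOfDisjoint {R M : Type*} [Ring R] [AddCommGroup M] [Module R M]
    {p p' : Submodule R M} (h : Disjoint p p') :
    (↥(p ⊔ p') ⧸ p'.comap (p ⊔ p').subtype) ≃ₗ[R] p :=
  (quotientInfEquivSupQuotient p p').symm.trans <| quotEquivOfEqBot _ <| by
    rw [comap_subtype_self, top_inf_eq, ← disjoint_iff_comap_eq_bot]
    exact h

theorem LinearMap.finrank_ker_eq_finrank_coker_of_finrank_quotient_eq {K U V : Type*} [Field K]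
    [AddCommGroup U] [Module K U] [AddCommGroup V] [Module K V]
    (T : U →ₗ[K] V) (Z : Submodule K U) (hZ : Disjoint Z (ker T))
    [FiniteDimensional K (U ⧸ Z)] [FiniteDimensional K (V ⧸ Z.map T)]
    (h : finrank K (U ⧸ Z) = finrank K (V ⧸ Z.map T)) :
    FiniteDimensional K (ker T) ∧ FiniteDimensional K (V ⧸ range T) ∧
      finrank K (ker T) = finrank K (V ⧸ range T) := by
  set T' := Z.mapQ (Z.map T) T (le_comap_map T Z)
  have hker : ker T' = (ker T).map Z.mkQ := by
    rw [ker_mapQ, comap_map_eq, Submodule.map_sup, mkQ_map_self, bot_sup_eq]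
  have hinj : Function.Injective (Z.mkQ ∘ₗ (ker T).subtype) := by
    rw [← LinearMap.ker_eq_bot, LinearMap.ker_comp, Submodule.ker_mkQ, eq_bot_iff]
    rintro x hx
    exact (Submodule.mem_bot K).2 (Subtype.ext (hZ.le_bot ⟨hx, x.2⟩))
  have eker : ker T ≃ₗ[K] ker T' :=
    (LinearEquiv.ofInjective _ hinj).trans (LinearEquiv.ofEq _ _ (by
      rw [hker, range_comp, range_subtype]))
  have ecoker : ((V ⧸ Z.map T) ⧸ LinearMap.range T') ≃ₗ[K] (V ⧸ range T) :=
    (quotEquivOfEq _ _ (range_mapQ _ _ _ _)).trans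
      (quotientQuotientEquivQuotient _ _ (map_le_range))
  have := T'.finrank_range_add_finrank_ker
  have := (range T').finrank_quotient_add_finrank
  refine ⟨Module.Finite.equiv eker.symm, Module.Finite.equiv ecoker, ?_⟩
  rw [eker.finrank_eq, ← ecoker.finrank_eq]
  omega

theorem zL_zpow (n : ℤ) : zL ^ n = HahnSeries.single n 1 := (RatFunc.single_zpow n).symm

theorem mem_Vphi_iff {x : LaurentSeries ℂ} :
    x ∈ Vphi ↔ ∀ n : ℤ, 0 < n → x.coeff n = 0 := by
  constructor
  · rintro ⟨y, rfl⟩ n hn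
    exact if_neg (not_le.2 hn)
  · intro hx
    refine ⟨x, HahnSeries.ext (funext fun n => ?_)⟩
    by_cases hn : n ≤ 0
    · exact if_pos hn
    · exact (if_neg hn).trans (hx n (not_le.1 hn)).symm

theorem trunc_of_mem_Vphi {x : LaurentSeries ℂ} (hx : x ∈ Vphi) : trunc x = x := by
  obtain ⟨y, rfl⟩ := hx
  refine HahnSeries.ext (funext fun n => ?_)
  by_cases hn : n ≤ 0 <;> simp [trunc, hn]

def negPowSpan (k : ℕ) : Submodule ℂ (LaurentSeries ℂ) :=
  span ℂ {h | ∃ l : ℕ, k ≤ l ∧ h = zL ^ (-(l : ℤ))}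

theorem mem_negPowSpan_iff {k : ℕ} {x : LaurentSeries ℂ} :
    x ∈ negPowSpan k ↔ ∀ n : ℤ, -(k : ℤ) < n → x.coeff n = 0 := by
  constructor
  · intro hx
    induction hx using span_induction with
    | mem y hy =>
      obtain ⟨l, hl, rfl⟩ := hy
      intro n hn
      rw [zL_zpow, HahnSeries.coeff_single_of_ne (by omega)]
    | zero => simp
    | add y z _ _ hy hz => intro n hn; simp [hy n hn, hz n hn]
    | smul c y _ hy => intro n hn; simp [hy n hn]
  · intro hx
    have hfin : x.support.Finite := (Set.finite_Icc x.order (-k)).subset fun n hn =>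
      ⟨HahnSeries.order_le_of_coeff_ne_zero hn, not_lt.1 fun h => hn (hx n h)⟩
    have hsum : x = ∑ n ∈ hfin.toFinset, x.coeff n • zL ^ n := by
      ext m
      simp [HahnSeries.coeff_sum, zL_zpow, HahnSeries.coeff_single]
    rw [hsum]
    refine sum_mem fun n hn => ?_
    have hnk : n ≤ -k := not_lt.1 fun h => hfin.mem_toFinset.1 hn (hx n h)
    refine smul_mem _ _ (subset_span ⟨(-n).toNat, by omega, ?_⟩)
    rw [Int.toNat_of_nonneg (by omega), neg_neg]

theorem negPowSpan_le_Vphi (k : ℕ) : negPowSpan k ≤ Vphi := fun x hx =>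
  mem_Vphi_iff.2 fun n hn => mem_negPowSpan_iff.1 hx n (by omega)

def lowCoeffs (k : ℕ) : Vphi →ₗ[ℂ] Fin k → ℂ :=
  LinearMap.pi fun j => HahnSeries.coeff.linearMap (-(j : ℤ)) ∘ₗ Vphi.subtype

theorem ker_lowCoeffs (k : ℕ) : ker (lowCoeffs k) = (negPowSpan k).comap Vphi.subtype := by
  ext ⟨x, hx⟩
  simp only [LinearMap.mem_ker, mem_comap, Submodule.subtype_apply, mem_negPowSpan_iff]
  constructor
  · intro h n hn
    by_cases hn0 : 0 < n
    · exact mem_Vphi_iff.1 hx n hn0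
    · simpa [lowCoeffs, Int.toNat_of_nonneg (by omega : 0 ≤ -n)] using
        congrFun h ⟨(-n).toNat, by omega⟩
  · intro h
    funext j
    exact h _ (by omega)

theorem lowCoeffs_surjective (k : ℕ) : Function.Surjective (lowCoeffs k) := by
  intro v
  have hmem : ∑ j : Fin k, HahnSeries.single (-(j : ℤ)) (v j) ∈ Vphi :=
    sum_mem fun j _ => mem_Vphi_iff.2 fun n hn => HahnSeries.coeff_single_of_ne (by omega)
  refine ⟨⟨_, hmem⟩, funext fun j => ?_⟩
  simp [lowCoeffs, HahnSeries.coeff_single, Fin.val_inj]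

theorem sup_negPowSpan_mem_UGM {k : ℕ} (P : Submodule ℂ (LaurentSeries ℂ))
    [FiniteDimensional ℂ P] (hP : finrank ℂ P = k) (hdisj : Disjoint P (negPowSpan k)) :
    P ⊔ negPowSpan k ∈ UGM := by
  set U := P ⊔ negPowSpan k
  set Z := (negPowSpan k).comap U.subtype
  have htrunc (z : U) (hz : z ∈ Z) : trunc z = z := trunc_of_mem_Vphi (negPowSpan_le_Vphi k hz)
  have hZ : Disjoint Z (ker (projU U)) := by
    refine disjoint_def.2 fun z hz hker => Subtype.ext ?_
    rw [← htrunc z hz]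
    exact congrArg Subtype.val hker
  have hmap : Z.map (projU U) = (negPowSpan k).comap Vphi.subtype := by
    ext ⟨x, hx⟩
    constructor
    · rintro ⟨z, hz, hzx⟩
      rw [← hzx, mem_comap]
      change trunc (z : LaurentSeries ℂ) ∈ negPowSpan k
      rwa [htrunc z hz]
    · intro hxN
      exact ⟨⟨x, le_sup_right (a := P) hxN⟩, hxN, Subtype.ext (trunc_of_mem_Vphi hx)⟩
  have eV : (Vphi ⧸ Z.map (projU U)) ≃ₗ[ℂ] (Fin k → ℂ) :=
    (quotEquivOfEq _ _ (hmap.trans (ker_lowCoeffs k).symm)).trans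
      ((lowCoeffs k).quotKerEquivOfSurjective (lowCoeffs_surjective k))
  have eU := Submodule.supQuotientEquivOfDisjoint hdisj
  have := Module.Finite.equiv eU.symm
  have := Module.Finite.equiv eV.symm
  exact (projU U).finrank_ker_eq_finrank_coker_of_finrank_quotient_eq Z hZ (by
    rw [eU.finrank_eq, eV.finrank_eq, hP, finrank_fin_fun])

theorem coeff_polyToL_div_of_neg (g : Polynomial ℂ) {f : Polynomial ℂ} (hf : f.eval 0 ≠ 0)
    {n : ℤ} (hn : n < 0) : (polyToL g / polyToL f).coeff n = 0 := by
  rw [polyToL, polyToL, ofPowerSeries_div _ (by simpa [Polynomial.coeff_zero_eq_eval_zero]),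
    PowerSeries.coeff_coe, if_pos hn]

theorem disjoint_span_negPowSpan {ι : Type*} {k : ℕ} (w : ι → LaurentSeries ℂ)
    (hw : ∀ i n, n ≤ -(k : ℤ) → (w i).coeff n = 0) :
    Disjoint (span ℂ (Set.range w)) (negPowSpan k) := by
  refine disjoint_def.2 fun x hx hxN => HahnSeries.ext (funext fun n => ?_)
  by_cases hn : -(k : ℤ) < n
  · exact mem_negPowSpan_iff.1 hxN n hn
  · clear hxN
    induction hx using span_induction with
    | mem y hy => obtain ⟨i, rfl⟩ := hy; exact hw i n (not_lt.1 hn)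
    | zero => rfl
    | add y z _ _ hy hz => simp [hy, hz]
    | smul c y _ hy => simp [hy]

theorem rational_frame_mem_UGM_general (k : ℕ)
    (f g : Fin k → Polynomial ℂ)
    (hf0 : ∀ i, (f i).eval 0 ≠ 0)
    (hli : LinearIndependent ℂ fun i => polyToL (g i) / polyToL (f i)) :
    Submodule.span ℂ
      ((Set.range fun i : Fin k =>
          zL ^ (-((k : ℤ) - 1)) * (polyToL (g i) / polyToL (f i))) ∪
        {h | ∃ l : ℕ, k ≤ l ∧ h = zL ^ (-(l : ℤ))}) ∈ UGM := by
  set w : Fin k → LaurentSeries ℂ :=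
    fun i => zL ^ (-((k : ℤ) - 1)) * (polyToL (g i) / polyToL (f i))
  have hshift : zL ^ (-((k : ℤ) - 1)) ≠ 0 := zpow_ne_zero _ (by simp [zL])
  have hw : LinearIndependent ℂ w :=
    hli.map' (LinearMap.mulLeft ℂ _) (LinearMap.ker_eq_bot.2 (mul_right_injective₀ hshift))
  have hw_low (i : Fin k) (n : ℤ) (hn : n ≤ -(k : ℤ)) : (w i).coeff n = 0 := by
    simp only [w]
    rw [zL_zpow, ← sub_add_cancel n (-((k : ℤ) - 1)), HahnSeries.coeff_single_mul_add, one_mul]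
    exact coeff_polyToL_div_of_neg _ (hf0 i) (by omega)
  have := FiniteDimensional.span_of_finite ℂ (Set.finite_range w)
  rw [span_union]
  exact sup_negPowSpan_mem_UGM _ ((finrank_span_eq_card hw).trans (Fintype.card_fin k))
    (disjoint_span_negPowSpan w hw_low)

/-- Corollary 5.2: for polynomials `f_i, g_i` with
`f_i(0) ≠ 0`, `deg g_i < deg f_i` and `g_1/f_1, …, g_k/f_k` linearly
independent, the span of `z^{-(k-1)} g_i(z)/f_i(z)` (`1 ≤ i ≤ k`) together with
`z^{-i}` (`i ≥ k`) is a point of the Sato Grassmannian. -/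
theorem rational_frame_mem_UGM (k : ℕ) (hk : 1 ≤ k)
    (f g : Fin k → Polynomial ℂ)
    (hf0 : ∀ i, (f i).eval 0 ≠ 0)
    (hdeg : ∀ i, (g i).degree < (f i).degree)
    (hli : LinearIndependent ℂ fun i => polyToL (g i) / polyToL (f i)) :
    Submodule.span ℂ
      ((Set.range fun i : Fin k =>
          zL ^ (-((k : ℤ) - 1)) * (polyToL (g i) / polyToL (f i))) ∪
        {h | ∃ l : ℕ, k ≤ l ∧ h = zL ^ (-(l : ℤ))}) ∈ UGM :=
  rational_frame_mem_UGM_general k f g hf0 hli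

end
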